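/- arXiv:1201.5744 — 3 statements merged into one kernel-verified Lean document; each statement's English description precedes it below -/
import Mathlib

section
/- Let c₁,…,c_n be a basis of ℝⁿ, U a k-dimensional subspace of ℝⁿ, and π : ℝⁿ → U the orthogonal projection onto U. Then one can choose indices j₁ < … < j_k such that π(c_{j₁}),…,π(c_{j_k}) form a basis of U and, for every vector v = a₁c₁ + … + a_nc_n with |aᵢ| ≤ N for all i (N > 0), the coordinates b₁,…,b_k of π(v) in this basis satisfy |bᵢ| ≤ n²·N for all i. -/
/-!
Fix a basis `e` of `U` and choose `k` of the projections `π(c_i)` whose determinant with respect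
to `e` is maximal in absolute value; it is nonzero because the `π(c_i)` span `U`, so they form a
basis. By Cramer's rule the `s`-th coordinate of any `π(c_i)` in this basis is the quotient of the
determinant with `π(c_i)` substituted in position `s` by the maximal one, hence of absolute value
at most `1`. Thus the coordinates of `π(v) = ∑ aᵢ π(cᵢ)` are at most `nN ≤ n²N`. Sorting the
chosen indices only changes the sign of the determinant.
-/

open Module Submodule Set Function

section

variable {K M ι : Type*} [Field K] [AddCommGroup M] [Module K M] {k : ℕ}

theorem Module.Basis.exists_det_comp_ne_zero (e : Basis (Fin k) K M) {w : ι → M}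
    (hw : span K (range w) = ⊤) : ∃ f : Fin k → ι, e.det (w ∘ f) ≠ 0 := by
  obtain ⟨κ, a, -, hsp, hli⟩ := exists_linearIndependent' K w
  let b := Basis.mk hli (hsp.trans hw).ge
  let σ := e.indexEquiv b
  have hb : ⇑(b.reindex σ.symm) = w ∘ a ∘ σ := by
    ext s; simp [b]
  exact ⟨a ∘ σ, hb ▸ (e.isUnit_det _).ne_zero⟩

variable [LinearOrder K] [IsStrictOrderedRing K]

theorem Module.Basis.abs_det_comp_perm (e : Basis (Fin k) K M) (v : Fin k → M)
    (σ : Equiv.Perm (Fin k)) : |e.det (v ∘ σ)| = |e.det v| := by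
  rw [AlternatingMap.map_perm, Units.smul_def, zsmul_eq_mul, abs_mul, abs_unit_intCast, one_mul]

theorem Module.Basis.exists_basis_abs_repr_le_one_of_abs_det_le (e : Basis (Fin k) K M)
    (w : ι → M) {f : Fin k → ι} (hf : e.det (w ∘ f) ≠ 0)
    (hmax : ∀ g : Fin k → ι, |e.det (w ∘ g)| ≤ |e.det (w ∘ f)|) :
    ∃ b : Basis (Fin k) K M, ⇑b = w ∘ f ∧ ∀ i s, |b.repr (w i) s| ≤ 1 := by
  obtain ⟨hli, hsp⟩ := e.is_basis_iff_det.mpr (isUnit_iff_ne_zero.mpr hf)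
  refine ⟨Basis.mk hli hsp.ge, Basis.coe_mk _ _, fun i s => ?_⟩
  -- Cramer's rule: replacing the `s`-th vector by `w i` multiplies the volume by this coordinate.
  have hcramer :
      e.det (w ∘ f) * (Basis.mk hli hsp.ge).repr (w i) s = e.det (w ∘ update f s i) := by
    have := congr($(e.det_smul_mk_coord_eq_det_update hli hsp.ge s) (w i))
    simpa [comp_update] using this
  refine le_of_mul_le_mul_left ?_ (abs_pos.mpr hf)
  rw [mul_one, ← abs_mul, hcramer]
  exact hmax _

theorem exists_strictMono_basis_abs_repr_le_one [Fintype ι] [LinearOrder ι] [Module.Finite K M]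
    {w : ι → M} (hw : span K (range w) = ⊤) (hk : finrank K M = k) :
    ∃ j : Fin k → ι, StrictMono j ∧
      ∃ b : Basis (Fin k) K M, ⇑b = w ∘ j ∧ ∀ i s, |b.repr (w i) s| ≤ 1 := by
  let e := finBasisOfFinrankEq K M hk
  obtain ⟨f₀, hf₀⟩ := e.exists_det_comp_ne_zero hw
  have : Nonempty (Fin k → ι) := ⟨f₀⟩
  obtain ⟨f, hmax⟩ := Finite.exists_max fun g : Fin k → ι => |e.det (w ∘ g)|
  have hf : e.det (w ∘ f) ≠ 0 := abs_pos.mp ((abs_pos.mpr hf₀).trans_le (hmax f₀))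
  have hinj : Injective f :=
    (e.is_basis_iff_det.mpr (isUnit_iff_ne_zero.mpr hf)).1.injective.of_comp
  let j := f ∘ Tuple.sort f
  have hdet : |e.det (w ∘ j)| = |e.det (w ∘ f)| := e.abs_det_comp_perm (w ∘ f) _
  refine ⟨j, (Tuple.monotone_sort f).strictMono_of_injective (hinj.comp (Equiv.injective _)), ?_⟩
  exact e.exists_basis_abs_repr_le_one_of_abs_det_le w (abs_pos.mp (hdet ▸ abs_pos.mpr hf))
    fun g => hdet ▸ hmax g

theorem Module.Basis.abs_repr_sum_smul_le {κ : Type*} [Fintype ι] (b : Basis κ K M) {w : ι → M}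
    (hw : ∀ i s, |b.repr (w i) s| ≤ 1) {a : ι → K} {N : K} (ha : ∀ i, |a i| ≤ N) (s : κ) :
    |b.repr (∑ i, a i • w i) s| ≤ Fintype.card ι * N := by
  simp only [map_sum, map_smul, Finsupp.coe_finsetSum, Finsupp.coe_smul, Finset.sum_apply,
    Pi.smul_apply, smul_eq_mul]
  calc |∑ i, a i * b.repr (w i) s| ≤ ∑ i, |a i| * |b.repr (w i) s| := by
        simpa only [abs_mul] using Finset.abs_sum_le_sum_abs (fun i => a i * b.repr (w i) s) _
    _ ≤ ∑ _i : ι, N := Finset.sum_le_sum fun i _ =>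
        (mul_le_mul (ha i) (hw i s) (abs_nonneg _) ((abs_nonneg _).trans (ha i))).trans_eq
          (mul_one N)
    _ = Fintype.card ι * N := by simp

end

theorem projection_basis_bounded_coords (n k : ℕ)
    (c : Module.Basis (Fin n) ℝ (EuclideanSpace ℝ (Fin n)))
    (U : Submodule ℝ (EuclideanSpace ℝ (Fin n)))
    (hU : Module.finrank ℝ U = k) :
    ∃ (j : Fin k → Fin n), StrictMono j ∧
      ∃ bU : Module.Basis (Fin k) ℝ U,
        (∀ s : Fin k, (bU s : EuclideanSpace ℝ (Fin n)) = U.orthogonalProjectionOnto (c (j s))) ∧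
        ∀ (N : ℝ), 0 < N → ∀ v : EuclideanSpace ℝ (Fin n),
          (∀ i, |c.repr v i| ≤ N) →
          ∀ s : Fin k, |bU.repr (U.orthogonalProjectionOnto v) s| ≤ (n : ℝ) ^ 2 * N := by
  let π : EuclideanSpace ℝ (Fin n) →ₗ[ℝ] U := U.orthogonalProjectionOnto
  have hspan : span ℝ (range (π ∘ c)) = ⊤ := by
    rw [range_comp, span_image, c.span_eq, Submodule.map_top, LinearMap.range_eq_top]
    exact fun u => ⟨u, U.orthogonalProjectionOnto_mem_subspace_eq_self u⟩
  obtain ⟨j, hj, bU, hbU, hbound⟩ := exists_strictMono_basis_abs_repr_le_one hspan hU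
  refine ⟨j, hj, bU, fun s => by rw [hbU]; rfl, fun N hN v hv s => ?_⟩
  have hπv : π v = ∑ i, c.repr v i • π (c i) := by
    conv_lhs => rw [← c.sum_repr v]
    simp only [map_sum, map_smul]
  calc |bU.repr (π v) s| ≤ n * N := by
        rw [hπv]
        simpa using bU.abs_repr_sum_smul_le hbound hv s
    _ ≤ (n : ℝ) ^ 2 * N := by
        gcongr
        exact_mod_cast Nat.le_self_pow two_ne_zero n
end

section
/- Let c₁,…,c_n be a basis of ℝⁿ and U a k-dimensional subspace with orthogonal projection π. Then there exists a subset {j₁,…,j_k} ⊆ {1,…,n} such that π(c_{j₁}),…,π(c_{j_k}) form a basis of U and every π(c_l), for l ∈ {1,…,n}, can be written as a linear combination of π(c_{j₁}),…,π(c_{j_k}) with all coefficients of absolute value at most n. -/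
/-!
Fix any basis `b₀` of `U` and choose `j` maximising `|b₀.det (π ∘ c ∘ j)|`; the maximum is
nonzero because the projections span `U`, so the chosen vectors form a basis `b`. Replacing the
`s`-th vector of `b` by `π (c l)` multiplies the determinant by the `s`-th coordinate of `π (c l)`
in `b` (Cramer's rule), so maximality bounds every coordinate by `1 ≤ n`.
-/

open Module Submodule Function Set

namespace Module.Basis

section CommRing

variable {ι R M : Type*} [Fintype ι] [DecidableEq ι] [CommRing R] [AddCommGroup M] [Module R M]

theorem det_update_self (b : Basis ι R M) (i : ι) (x : M) :
    b.det (update b i x) = b.repr x i := by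
  rw [det_apply, toMatrix_update, toMatrix_self, ← Matrix.cramer_apply, Matrix.cramer_one]
  rfl

theorem det_update (e b : Basis ι R M) (i : ι) (x : M) :
    e.det (update b i x) = e.det b * b.repr x i := by
  rw [← det_update_self, ← smul_eq_mul, ← AlternatingMap.smul_apply, ← e.det.eq_smul_basis_det b]

end CommRing

section Field

variable {ι κ K V : Type*} [Field K] [AddCommGroup V] [Module K V] [Fintype κ] [DecidableEq κ]

theorem exists_det_comp_ne_zero_s4 (b₀ : Basis κ K V) {v : ι → V}
    (hv : span K (range v) = ⊤) : ∃ j : κ → ι, b₀.det (v ∘ j) ≠ 0 := by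
  let b := (Basis.ofSpan hv.ge).reindex ((Basis.ofSpan hv.ge).indexEquiv b₀)
  have hb : ∀ s, b s ∈ range v := fun s => Basis.ofSpan_subset hv.ge (by simp [b])
  choose j hj using hb
  exact ⟨j, by rw [show v ∘ j = b from funext hj]; exact (b₀.isUnit_det b).ne_zero⟩

theorem exists_basis_comp_abs_repr_le_one [LinearOrder K] [IsStrictOrderedRing K] [Finite ι]
    (b₀ : Basis κ K V) {v : ι → V} (hv : span K (range v) = ⊤) :
    ∃ (j : κ → ι) (b : Basis κ K V), ⇑b = v ∘ j ∧ ∀ l s, |b.repr (v l) s| ≤ 1 := by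
  have := Fintype.ofFinite ι
  obtain ⟨j₁, hj₁⟩ := b₀.exists_det_comp_ne_zero_s4 hv
  obtain ⟨j, -, hmax⟩ := Finset.exists_max_image Finset.univ (fun j => |b₀.det (v ∘ j)|)
    ⟨j₁, Finset.mem_univ _⟩
  have hdet : b₀.det (v ∘ j) ≠ 0 := by
    have := hmax j₁ (Finset.mem_univ _)
    intro h0
    rw [h0, abs_zero] at this
    exact hj₁ (abs_nonpos_iff.mp this)
  obtain ⟨hli, hsp⟩ := b₀.is_basis_iff_det.mpr (isUnit_iff_ne_zero.mpr hdet)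
  let b := Basis.mk hli hsp.ge
  have hb : ⇑b = v ∘ j := Basis.coe_mk _ _
  refine ⟨j, b, hb, fun l s => ?_⟩
  have hvol : |b₀.det b| * |b.repr (v l) s| ≤ |b₀.det b| := by
    rw [← abs_mul, ← b₀.det_update, hb, ← comp_update]
    exact hmax _ (Finset.mem_univ _)
  exact le_of_mul_le_mul_left (by simpa only [mul_one] using hvol) (abs_pos.mpr (hb ▸ hdet))

end Field

end Module.Basis

theorem projection_basis_coeff_le_n (n k : ℕ)
    (c : Module.Basis (Fin n) ℝ (EuclideanSpace ℝ (Fin n)))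
    (U : Submodule ℝ (EuclideanSpace ℝ (Fin n)))
    (hU : Module.finrank ℝ U = k) :
    ∃ (j : Fin k → Fin n), Function.Injective j ∧
      ∃ bU : Module.Basis (Fin k) ℝ U,
        (∀ s : Fin k, (bU s : EuclideanSpace ℝ (Fin n)) = Submodule.orthogonalProjectionOnto U (c (j s))) ∧
        ∀ (l : Fin n) (s : Fin k),
          |bU.repr (Submodule.orthogonalProjectionOnto U (c l)) s| ≤ (n : ℝ) := by
  set π := U.orthogonalProjectionOnto
  have hspan : span ℝ (range (π ∘ c)) = ⊤ := by
    rw [range_comp, ← ContinuousLinearMap.coe_coe, span_image, c.span_eq, Submodule.map_top,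
      LinearMap.range_eq_top]
    exact fun u => ⟨u, U.orthogonalProjectionOnto_mem_subspace_eq_self u⟩
  obtain ⟨j, b, hb, hle⟩ :=
    (Module.finBasisOfFinrankEq ℝ U hU).exists_basis_comp_abs_repr_le_one hspan
  refine ⟨j, (hb ▸ b.injective).of_comp, b, fun s => by simp [hb], fun l s => ?_⟩
  calc |b.repr (π (c l)) s| ≤ 1 := hle l s
    _ ≤ n := by exact_mod_cast l.pos
end

section
/- Let L ⊂ ℝᵈ be a full-rank lattice with basis B₁,…,B_d, let U be an m-dimensional subspace of ℝᵈ with m < d, and let π be the orthogonal projection onto U. Then there is a constant C > 0 (depending only on L and U) such that for every positive integer N there exists a nonzero lattice point X = Σᵢ bᵢBᵢ with bᵢ ∈ ℤ, |bᵢ| ≤ 2N for all i, and ‖π(X)‖ ≤ C · N^(−(d−m)/m). -/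
/-!
Integer combinations `∑ cᵢ Bᵢ` with `0 ≤ cᵢ ≤ 2N` are `(2N+1)^d` points whose projections to `U`
lie in a ball of radius `O(N)`. Cutting the surrounding cube of `U ≅ ℝ^m` into `K^m ≈ N^d` boxes
of side `O(N / K) = O(N^{1 - d/m})` leaves, since `m < d`, fewer boxes than points; two points in
the same box differ by a nonzero lattice vector with coefficients in `[-2N, 2N]` and a short
projection.
-/

open Finset Module RealInnerProductSpace

theorem exists_ne_forall_abs_sub_lt_of_card_lt {α κ : Type*} [Fintype α] [Fintype κ]
    (f : α → κ → ℝ) {S : ℝ} {K : ℕ} (hK : 0 < K) (hf : ∀ a i, |f a i| < S)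
    (hcard : K ^ Fintype.card κ < Fintype.card α) :
    ∃ a b, a ≠ b ∧ ∀ i, |f a i - f b i| < 2 * S / K := by
  classical
  -- `t a i` is the `i`-th coordinate of `f a`, rescaled from `(-S, S)` to `[0, K)`.
  set t : α → κ → ℝ := fun a i => (f a i + S) * K / (2 * S)
  have ht : ∀ a i, 0 ≤ t a i ∧ t a i < K := fun a i => by
    have hS : 0 < S := (abs_nonneg _).trans_lt (hf a i)
    obtain ⟨hlo, hhi⟩ := abs_lt.1 (hf a i)
    refine ⟨div_nonneg (mul_nonneg (by linarith) K.cast_nonneg) (by positivity), ?_⟩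
    rw [div_lt_iff₀ (by positivity)]
    nlinarith [(Nat.cast_pos.2 hK : (0 : ℝ) < K)]
  let cell : α → κ → Fin K := fun a i => ⟨⌊t a i⌋₊, (Nat.floor_lt (ht a i).1).2 (ht a i).2⟩
  obtain ⟨a, b, hab, hcell⟩ := Fintype.exists_ne_map_eq_of_card_lt cell (by simpa using hcard)
  refine ⟨a, b, hab, fun i => ?_⟩
  have hS : 0 < S := (abs_nonneg _).trans_lt (hf a i)
  have hfloor : ⌊t a i⌋ = ⌊t b i⌋ := by
    rw [← Int.natCast_floor_eq_floor (ht a i).1, ← Int.natCast_floor_eq_floor (ht b i).1]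
    exact congrArg Nat.cast (Fin.val_eq_of_eq (congrFun hcell i))
  have hclose := Int.abs_sub_lt_one_of_floor_eq_floor hfloor
  have hdiff : t a i - t b i = (f a i - f b i) * K / (2 * S) := by simp only [t]; ring
  rw [hdiff, abs_div, abs_mul, Nat.abs_cast, abs_of_pos (by positivity : (0 : ℝ) < 2 * S),
    div_lt_one (by positivity)] at hclose
  rwa [lt_div_iff₀ (by positivity)]

theorem exists_int_combination_norm_le {ι E : Type*} [Fintype ι] [NormedAddCommGroup E]
    [InnerProductSpace ℝ E] [FiniteDimensional ℝ E] (w : ι → E) {N K : ℕ} {S : ℝ}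
    (hK : 0 < K) (hS : 2 * N * ∑ i, ‖w i‖ < S)
    (hcard : K ^ finrank ℝ E < (2 * N + 1) ^ Fintype.card ι) :
    ∃ c : ι → ℤ, c ≠ 0 ∧ (∀ i, |c i| ≤ 2 * (N : ℤ)) ∧
      ‖∑ i, (c i : ℝ) • w i‖ ≤ √(finrank ℝ E) * (2 * S / K) := by
  classical
  let o := stdOrthonormalBasis ℝ E
  let coeff : (ι → Fin (2 * N + 1)) → ι → ℤ := fun c i => (c i : ℕ)
  have hcoeff : ∀ c i, 0 ≤ coeff c i ∧ coeff c i ≤ 2 * N := fun c i => by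
    have := (c i).isLt
    simp only [coeff]
    omega
  let x : (ι → Fin (2 * N + 1)) → E := fun c => ∑ i, (coeff c i : ℝ) • w i
  have hx : ∀ c, ‖x c‖ < S := fun c => by
    refine lt_of_le_of_lt ?_ hS
    rw [mul_sum]
    refine (norm_sum_le _ _).trans (sum_le_sum fun i _ => ?_)
    rw [norm_smul, Real.norm_eq_abs, abs_of_nonneg (by exact_mod_cast (hcoeff c i).1)]
    gcongr
    exact_mod_cast (hcoeff c i).2
  have hinner : ∀ c j, |⟪o j, x c⟫| < S := fun c j =>
    (abs_real_inner_le_norm _ _).trans_lt (by rw [o.norm_eq_one, one_mul]; exact hx c)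
  obtain ⟨c, c', hne, hclose⟩ := exists_ne_forall_abs_sub_lt_of_card_lt
    (fun c j => ⟪o j, x c⟫) hK hinner (by simpa using hcard)
  refine ⟨coeff c - coeff c', fun h => hne ?_, fun i => ?_, ?_⟩
  · funext i
    have hi := congrFun h i
    simp only [Pi.sub_apply, Pi.zero_apply, sub_eq_zero, coeff, Nat.cast_inj] at hi
    exact Fin.ext hi
  · have := hcoeff c i
    have := hcoeff c' i
    rw [Pi.sub_apply, abs_le]
    omega
  · have hsub : ∑ i, ((coeff c - coeff c') i : ℝ) • w i = x c - x c' := by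
      simp only [x, Pi.sub_apply, Int.cast_sub, sub_smul, sum_sub_distrib]
    have hS0 : 0 ≤ S := (norm_nonneg _).trans (hx c).le
    rw [hsub]
    refine (o.norm_le_card_mul_iSup_norm_inner _).trans ?_
    rw [Fintype.card_fin]
    gcongr
    refine Real.iSup_le (fun j => ?_) (by positivity)
    rw [inner_sub_right, Real.norm_eq_abs]
    exact (hclose j).le

theorem ceil_rpow_div_pow_lt {d m N : ℕ} (hm : 0 < m) (hmd : m < d) (hN : 0 < N) :
    ⌈(N : ℝ) ^ ((d : ℝ) / m)⌉₊ ^ m < (2 * N + 1) ^ d := by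
  have hN1 : (1 : ℝ) ≤ N := by exact_mod_cast hN
  have hpow : (1 : ℝ) ≤ (N : ℝ) ^ ((d : ℝ) / m) := Real.one_le_rpow hN1 (by positivity)
  have hceil : (⌈(N : ℝ) ^ ((d : ℝ) / m)⌉₊ : ℝ) ≤ 2 * (N : ℝ) ^ ((d : ℝ) / m) := by
    linarith [Nat.ceil_lt_add_one (zero_le_one.trans hpow)]
  have hpow_m : ((N : ℝ) ^ ((d : ℝ) / m)) ^ m = (N : ℝ) ^ d := by
    rw [← Real.rpow_mul_natCast (by positivity), div_mul_cancel₀ _ (by positivity),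
      Real.rpow_natCast]
  have h2 : (2 : ℝ) ^ m < 2 ^ d := pow_lt_pow_right₀ one_lt_two hmd
  have hN_d : (0 : ℝ) < (N : ℝ) ^ d := by positivity
  suffices (⌈(N : ℝ) ^ ((d : ℝ) / m)⌉₊ : ℝ) ^ m < (2 * N + 1 : ℝ) ^ d by exact_mod_cast this
  calc (⌈(N : ℝ) ^ ((d : ℝ) / m)⌉₊ : ℝ) ^ m
      ≤ (2 * (N : ℝ) ^ ((d : ℝ) / m)) ^ m := by gcongr
    _ = 2 ^ m * (N : ℝ) ^ d := by rw [mul_pow, hpow_m]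
    _ < 2 ^ d * (N : ℝ) ^ d := by gcongr
    _ = (2 * N : ℝ) ^ d := (mul_pow _ _ _).symm
    _ ≤ (2 * N + 1 : ℝ) ^ d := by gcongr; linarith

theorem pigeonhole_small_projection (d m : ℕ) (hm : 0 < m) (hmd : m < d)
    (B : Module.Basis (Fin d) ℝ (EuclideanSpace ℝ (Fin d)))
    (U : Submodule ℝ (EuclideanSpace ℝ (Fin d)))
    (hU : Module.finrank ℝ U = m) :
    ∃ C : ℝ, 0 < C ∧ ∀ N : ℕ, 0 < N →
      ∃ b : Fin d → ℤ, b ≠ 0 ∧ (∀ i, |b i| ≤ 2 * (N : ℤ)) ∧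
        ‖(Submodule.orthogonalProjectionOnto U (∑ i, (b i : ℝ) • B i) : EuclideanSpace ℝ (Fin d))‖ ≤
          C * (N : ℝ) ^ (-(((d : ℝ) - (m : ℝ)) / (m : ℝ))) := by
  set π := U.orthogonalProjectionOnto
  set R := ∑ i, ‖π (B i)‖
  refine ⟨2 * √m * (2 * R + 1), by positivity, fun N hN => ?_⟩
  have hNpos : (0 : ℝ) < N := by exact_mod_cast hN
  set K := ⌈(N : ℝ) ^ ((d : ℝ) / m)⌉₊
  obtain ⟨b, hb0, hb, hsmall⟩ := exists_int_combination_norm_le (fun i => π (B i))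
    (N := N) (K := K) (S := N * (2 * R + 1)) (Nat.ceil_pos.2 (by positivity)) (by nlinarith)
    (by rw [hU, Fintype.card_fin]; exact ceil_rpow_div_pow_lt hm hmd hN)
  refine ⟨b, hb0, hb, ?_⟩
  have hexp : (N : ℝ) ^ (-(((d : ℝ) - m) / m)) = N / (N : ℝ) ^ ((d : ℝ) / m) := by
    rw [show -(((d : ℝ) - m) / m) = 1 - d / m by field_simp; ring, Real.rpow_sub hNpos,
      Real.rpow_one]
  calc ‖(π (∑ i, (b i : ℝ) • B i) : EuclideanSpace ℝ (Fin d))‖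
      = ‖∑ i, (b i : ℝ) • π (B i)‖ := by simp only [map_sum, map_smul, Submodule.coe_norm]
    _ ≤ √m * (2 * (N * (2 * R + 1)) / K) := hU ▸ hsmall
    _ = 2 * √m * (2 * R + 1) * (N / K) := by ring
    _ ≤ 2 * √m * (2 * R + 1) * (N / (N : ℝ) ^ ((d : ℝ) / m)) := by
        gcongr
        exact Nat.le_ceil _
    _ = 2 * √m * (2 * R + 1) * (N : ℝ) ^ (-(((d : ℝ) - m) / m)) := by rw [hexp]
end
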